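/- (Minimality count.) Let A be a real central hyperplane arrangement with ordering satisfying the cut property w.r.t. a chamber B. Then the number of chambers C with |η(C)| = k equals the number of nbc sets of A of cardinality k; consequently the Salvetti complex of A admits an acyclic matching whose number of critical cells in dimension k equals the rank of the k-th cohomology group of the complement of the complexified arrangement (i.e., the k-th Betti number, given by the number of nbc sets of size k). -/

import Mathlib

open scoped Classical

/-- The sign of a real number, as an element of `SignType`. -/
noncomputable def sgn (r : ℝ) : SignType := if 0 < r then 1 else if r < 0 then -1 else 0

/-- An arrangement of linear hyperplanes in a real vector space `V`, with linearly
ordered ground set a finite set `E` of natural numbers: hyperplane `H_i = ker (f i)`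
for `i ∈ E`. -/
structure NArr (V : Type) [AddCommGroup V] [Module ℝ V] where
  E : Finset ℕ
  f : ℕ → V →ₗ[ℝ] ℝ
  nz : ∀ i ∈ E, f i ≠ 0

variable {V : Type} [AddCommGroup V] [Module ℝ V]

/-- A chamber of `A`, encoded by its sign vector (supported on the ground set). -/
def NArr.IsChamber (A : NArr V) (C : ℕ → SignType) : Prop :=
  (∀ i ∈ A.E, C i ≠ 0) ∧ (∀ i ∉ A.E, C i = 0) ∧ ∃ x, ∀ i ∈ A.E, sgn (A.f i x) = C i

/-- The largest (= last) hyperplane of `A`. -/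
noncomputable def NArr.last (A : NArr V) : ℕ := A.E.sup id

/-- The deletion `A' = A ∖ {H_n}` of the last hyperplane. -/
noncomputable def NArr.delete (A : NArr V) : NArr V :=
  ⟨A.E.erase A.last, A.f, fun i hi => A.nz i (Finset.mem_of_mem_erase hi)⟩

/-- The ground set of the restriction `A'' = {H ∩ H_n | H ∈ A'}`: each flat `H ∩ H_n`
is labeled by the smallest hyperplane of `A` containing it. -/
noncomputable def NArr.resE (A : NArr V) : Finset ℕ :=
  (A.E.erase A.last).filter fun i =>
    (A.f i).domRestrict (LinearMap.ker (A.f A.last)) ≠ 0 ∧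
    ∀ j ∈ A.E.erase A.last,
      LinearMap.ker (A.f j) ⊓ LinearMap.ker (A.f A.last) =
        LinearMap.ker (A.f i) ⊓ LinearMap.ker (A.f A.last) → i ≤ j

/-- The restriction `A''` of `A` to its last hyperplane, with the induced ordering. -/
noncomputable def NArr.restrict (A : NArr V) : NArr ↥(LinearMap.ker (A.f A.last)) :=
  ⟨A.resE, fun i => (A.f i).domRestrict (LinearMap.ker (A.f A.last)),
   fun i hi => (Finset.mem_filter.mp hi).2.1⟩

/-- Restriction of a sign vector to a subset of the ground set. -/
def restrictSigns (S : Finset ℕ) (C : ℕ → SignType) : ℕ → SignType :=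
  fun i => if i ∈ S then C i else 0

/-- `C ∈ B↑`: the chamber `C` lies on the non-`B` side of the last hyperplane `H_n` and
the chamber of the deletion `A'` containing it is cut by `H_n`. -/
def NArr.upperCond (A : NArr V) (B C : ℕ → SignType) : Prop :=
  C A.last ≠ B A.last ∧
    ∃ x, A.f A.last x = 0 ∧ ∀ i ∈ A.E.erase A.last, sgn (A.f i x) = C i

/-- The Jewell–Orlik recursion: `IsJO V A B η` holds iff `η` is obtained by the recursive
deletion–restriction definition of the map of Jewell and Orlik for the arrangement `A`
with base chamber `B`:  `η(C) = η'(C')` if `C ∈ U ∪ B↓`, and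
`η(C) = {H_n} ∪ η''(C ∩ H_n)` (labels taken in `A`) if `C ∈ B↑`. -/
inductive IsJO :
    ∀ (V : Type) [AddCommGroup V] [Module ℝ V],
      NArr V → (ℕ → SignType) → ((ℕ → SignType) → Finset ℕ) → Prop
  | base {V : Type} [AddCommGroup V] [Module ℝ V] (A : NArr V) (B : ℕ → SignType)
      (η : (ℕ → SignType) → Finset ℕ) :
      A.E = ∅ → (∀ C, η C = ∅) → IsJO V A B η
  | step {V : Type} [AddCommGroup V] [Module ℝ V] (A : NArr V) (B : ℕ → SignType)
      (η η' : (ℕ → SignType) → Finset ℕ) (η'' : (ℕ → SignType) → Finset ℕ) :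
      A.E.Nonempty →
      IsJO V A.delete (restrictSigns (A.E.erase A.last) B) η' →
      IsJO ↥(LinearMap.ker (A.f A.last)) A.restrict (restrictSigns A.resE B) η'' →
      (∀ C, A.IsChamber C → ¬ A.upperCond B C →
        η C = η' (restrictSigns (A.E.erase A.last) C)) →
      (∀ C, A.IsChamber C → A.upperCond B C →
        η C = insert A.last (η'' (restrictSigns A.resE C))) →
      IsJO V A B η

/-- Independent sets of the underlying matroid. -/
def NArr.Indep (A : NArr V) (S : Finset ℕ) : Prop :=
  S ⊆ A.E ∧ LinearIndependent ℝ (fun i : S => A.f i.1)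

/-- Circuits: minimal dependent subsets. -/
def NArr.IsCircuit (A : NArr V) (S : Finset ℕ) : Prop :=
  S ⊆ A.E ∧ ¬ A.Indep S ∧ ∀ T ⊂ S, A.Indep T

/-- Broken circuits: circuits with their smallest element removed. -/
def NArr.IsBroken (A : NArr V) (S : Finset ℕ) : Prop :=
  ∃ T, A.IsCircuit T ∧ ∃ h : T.Nonempty, S = T.erase (T.min' h)

/-- The no-broken-circuit sets of `A`. -/
def NArr.nbc (A : NArr V) : Set (Finset ℕ) :=
  {S | A.Indep S ∧ ∀ T, A.IsBroken T → ¬ T ⊆ S}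

/-- The real value of a sign. -/
def signVal : SignType → ℝ
  | SignType.zero => 0
  | SignType.neg => -1
  | SignType.pos => 1

/-- The ordering of the hyperplanes of `A` satisfies the cut property with respect to
`B` : every hyperplane which is not the first one meets the interior of the base
chamber of the preceding ones. -/
def NArr.CutProp (A : NArr V) (B : ℕ → SignType) : Prop :=
  ∀ j ∈ A.E, (∃ i ∈ A.E, i < j) →
    ∃ x, A.f j x = 0 ∧ ∀ i ∈ A.E, i < j → 0 < signVal (B i) * A.f i x

/-- The flat spanned by a set of hyperplanes. -/
noncomputable def NArr.flatOf (A : NArr V) (S : Finset ℕ) : Submodule ℝ V :=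
  ⨅ i ∈ S, LinearMap.ker (A.f i)

/-!
Both counts obey the same deletion–restriction recursion as `η`. A set `S` is nbc iff no
`H_j` lies in the span of the members of `S` after `j`. Hence the nbc sets avoiding the last
hyperplane `H_n` are those of the deletion `A'`, and `S ∪ {H_n}` is nbc iff `S`, restricted to
`H_n`, is an nbc set of `A''`: adding `f_n` to a span is the same as restricting to `ker f_n`.
On the chamber side, the chambers outside `B↑` are in bijection with the chambers of `A'`
(of the two lifts of a chamber cut by `H_n`, keep the one on the side of `B`), and the
chambers in `B↑` with those of `A''`, with `|η|` one larger. If some `H_j` coincides with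
`H_n`, neither `B↑` nor the nbc sets containing `H_n` contribute. Induction along the
recursion then equates the number of chambers with `|η(C)|` in any given set of values with
the number of nbc sets whose cardinality lies in that set.
-/

open Submodule in
theorem linearIndepOn_finset_iff_notMem_span_gt {ι K M : Type*} [LinearOrder ι] [DivisionRing K]
    [AddCommGroup M] [Module K M] (v : ι → M) (S : Finset ι) :
    LinearIndepOn K v (S : Set ι) ↔ ∀ j ∈ S, v j ∉ span K (v '' {i | i ∈ S ∧ j < i}) := by
  induction S using Finset.induction_on_min with
  | empty => simp
  | insert a s ha ih =>
    have hlater : {i | i ∈ insert a s ∧ a < i} = s := by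
      ext i
      simp only [Finset.mem_insert, Set.mem_ofPred_eq, Finset.mem_coe]
      exact ⟨fun ⟨h, hai⟩ => h.resolve_left (ne_of_gt hai), fun h => ⟨Or.inr h, ha i h⟩⟩
    have hlater' : ∀ j ∈ s, {i | i ∈ insert a s ∧ j < i} = {i | i ∈ s ∧ j < i} := by
      intro j hj
      ext i
      simp only [Finset.mem_insert, Set.mem_ofPred_eq]
      refine ⟨fun ⟨h, hji⟩ => ⟨h.resolve_left ?_, hji⟩, fun ⟨h, hji⟩ => ⟨Or.inr h, hji⟩⟩
      rintro rfl
      exact lt_asymm hji (ha j hj)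
    rw [Finset.coe_insert, linearIndepOn_insert (fun h => lt_irrefl a (ha a h)), ih,
      Finset.forall_mem_insert, hlater, and_comm]
    exact and_congr_right' (forall₂_congr fun j hj => by rw [hlater' j hj])

section Dual

open LinearMap Submodule

variable {K M : Type*} [Field K] [AddCommGroup M] [Module K M]

theorem mem_span_singleton_of_ker_le {φ ψ : M →ₗ[K] K} (h : ker φ ≤ ker ψ) :
    ψ ∈ span K {φ} := by
  simpa using mem_span_of_iInf_ker_le_ker (L := fun _ : Unit => φ) (by simpa using h)

theorem ker_dualRestrict_ker (φ : M →ₗ[K] K) : ker (ker φ).dualRestrict = span K {φ} := by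
  ext ψ
  rw [dualRestrict_ker_eq_dualAnnihilator, mem_dualAnnihilator]
  refine ⟨fun h => mem_span_singleton_of_ker_le fun x hx => h x hx, fun h x hx => ?_⟩
  obtain ⟨c, rfl⟩ := mem_span_singleton.mp h
  simp [mem_ker.mp hx]

theorem dualRestrict_ker_mem_span_image_iff (φ ψ : M →ₗ[K] K) (X : Set (M →ₗ[K] K)) :
    (ker φ).dualRestrict ψ ∈ span K ((ker φ).dualRestrict '' X) ↔ ψ ∈ span K (insert φ X) := by
  rw [span_image, mem_map, span_insert, mem_sup]
  constructor
  · rintro ⟨χ, hχ, heq⟩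
    have : ψ - χ ∈ span K {φ} := by
      rw [← ker_dualRestrict_ker, mem_ker, map_sub, heq, sub_self]
    exact ⟨ψ - χ, this, χ, hχ, sub_add_cancel ψ χ⟩
  · rintro ⟨α, hα, χ, hχ, rfl⟩
    rw [← ker_dualRestrict_ker] at hα
    exact ⟨χ, hχ, by rw [map_add, mem_ker.mp hα, zero_add]⟩

end Dual

theorem sgn_eq_sign (r : ℝ) : sgn r = SignType.sign r := rfl

theorem sgn_eq_zero_iff {r : ℝ} : sgn r = 0 ↔ r = 0 := by
  rw [sgn_eq_sign, sign_eq_zero_iff]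

theorem sgn_mul (r s : ℝ) : sgn (r * s) = sgn r * sgn s := by
  simp only [sgn_eq_sign, sign_mul]

theorem sgn_add_of_sgn_eq {a b u v : ℝ} (ha : 0 < a) (hb : 0 < b) (h : sgn u = sgn v) :
    sgn (a * u + b * v) = sgn u := by
  simp only [sgn_eq_sign] at h ⊢
  rcases lt_trichotomy u 0 with hu | rfl | hu
  · have hv : v < 0 := sign_eq_neg_one_iff.mp (h ▸ sign_neg hu)
    rw [sign_neg hu, sign_neg (by nlinarith)]
  · rw [sign_zero, eq_comm, sign_eq_zero_iff] at h
    simp [h]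
  · have hv : 0 < v := sign_eq_one_iff.mp (h ▸ sign_pos hu)
    rw [sign_pos hu, sign_pos (by nlinarith)]

theorem exists_sgn_eq {M : Type*} [AddCommGroup M] [Module ℝ M] {φ : M →ₗ[ℝ] ℝ} (hφ : φ ≠ 0)
    {s : SignType} (hs : s ≠ 0) : ∃ w, sgn (φ w) = s := by
  obtain ⟨w, hw⟩ : ∃ w, φ w ≠ 0 := by simpa using DFunLike.ne_iff.mp hφ
  rcases s with _ | _ | _
  · exact absurd rfl hs
  · exact ⟨-(φ w)⁻¹ • w, by simp [sgn_eq_sign, hw]⟩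
  · exact ⟨(φ w)⁻¹ • w, by simp [sgn_eq_sign, hw]⟩

theorem exists_pos_sgn_add_mul_eq {ι : Type*} (T : Finset ι) (a b : ι → ℝ)
    (ha : ∀ i ∈ T, a i ≠ 0) : ∃ ε > 0, ∀ i ∈ T, sgn (a i + ε * b i) = sgn (a i) := by
  have hev : ∀ i ∈ T, ∀ᶠ ε in nhds (0 : ℝ), |ε * b i| < |a i| := fun i hi =>
    (((continuous_id.mul continuous_const).abs.tendsto' 0 0 (by simp)).eventually
      (gt_mem_nhds (abs_pos.mpr (ha i hi))))
  obtain ⟨ε, hε, hεpos⟩ := (((Filter.eventually_all_finset T).mpr hev).filter_mono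
    nhdsWithin_le_nhds |>.and (self_mem_nhdsWithin (s := Set.Ioi 0))).exists
  refine ⟨ε, hεpos, fun i hi => ?_⟩
  simp only [sgn_eq_sign]
  rcases (ha i hi).lt_or_gt with h | h
  · have := (abs_lt.mp (hε i hi)).2
    rw [abs_of_neg h] at this
    rw [sign_neg h, sign_neg (by linarith)]
  · have := (abs_lt.mp (hε i hi)).1
    rw [abs_of_pos h] at this
    rw [sign_pos h, sign_pos (by linarith)]

theorem SignType.eq_of_ne_of_ne {a b c : SignType} (ha : a ≠ 0) (hb : b ≠ 0) (hc : c ≠ 0)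
    (hac : a ≠ c) (hbc : b ≠ c) : a = b := by
  cases a <;> cases b <;> cases c <;> simp_all

theorem restrictSigns_restrictSigns {S T : Finset ℕ} (h : S ⊆ T) (g : ℕ → SignType) :
    restrictSigns S (restrictSigns T g) = restrictSigns S g :=
  funext fun i => by
    by_cases hi : i ∈ S
    · simp [restrictSigns, hi, h hi]
    · simp [restrictSigns, hi]

theorem restrictSigns_ne_zero {S T : Finset ℕ} {B : ℕ → SignType} (hB : ∀ i ∈ T, B i ≠ 0)
    (hS : S ⊆ T) : ∀ i ∈ S, restrictSigns S B i ≠ 0 := fun i hi => by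
  rw [restrictSigns, if_pos hi]
  exact hB i (hS hi)

theorem ncard_and_eq_of_bijOn {α β : Type*} {f : α → β} {P : α → Prop} {Q : β → Prop}
    (hf : Set.BijOn f {x | P x} {y | Q y}) {p : α → Prop} {q : β → Prop}
    (hpq : ∀ x, P x → (p x ↔ q (f x))) : {x | P x ∧ p x}.ncard = {y | Q y ∧ q y}.ncard := by
  refine Set.BijOn.ncard_eq ⟨fun x hx => ⟨hf.mapsTo hx.1, (hpq x hx.1).mp hx.2⟩,
    hf.injOn.mono fun x hx => hx.1, fun y hy => ?_⟩
  obtain ⟨x, hx, rfl⟩ := hf.surjOn hy.1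
  exact ⟨x, ⟨hx, (hpq x hx).mpr hy.2⟩, rfl⟩

theorem ncard_and_eq_add {α : Type*} {P : α → Prop} (hP : {x | P x}.Finite) (R p : α → Prop) :
    {x | P x ∧ p x}.ncard = {x | (P x ∧ R x) ∧ p x}.ncard + {x | (P x ∧ ¬ R x) ∧ p x}.ncard := by
  rw [← Set.ncard_inter_add_ncard_sdiff_eq_ncard {x | P x ∧ p x} {x | R x}
    (hP.subset fun x hx => hx.1)]
  congr 2 <;> ext x <;> simp only [Set.mem_inter_iff, Set.mem_sdiff, Set.mem_ofPred_eq] <;> tauto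

namespace NArr

variable {A : NArr V}

open LinearMap Submodule

theorem le_last {i : ℕ} (hi : i ∈ A.E) : i ≤ A.last := Finset.le_sup (f := id) hi

theorem last_mem (hne : A.E.Nonempty) : A.last ∈ A.E := by
  obtain ⟨i, hi, h⟩ := Finset.exists_mem_eq_sup A.E hne id
  rw [last, h]
  exact hi

theorem lt_last {i : ℕ} (hi : i ∈ A.E.erase A.last) : i < A.last :=
  lt_of_le_of_ne (le_last (Finset.mem_of_mem_erase hi)) (Finset.ne_of_mem_erase hi)

theorem forall_mem_erase_last_iff {P : ℕ → Prop} (h : A.last ∈ A.E → P A.last) :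
    (∀ j ∈ A.E.erase A.last, P j) ↔ ∀ j ∈ A.E, P j := by
  refine ⟨fun hP j hj => ?_, fun hP j hj => hP j (Finset.mem_of_mem_erase hj)⟩
  rcases eq_or_ne j A.last with rfl | hjn
  · exact h hj
  · exact hP j (Finset.mem_erase.mpr ⟨hjn, hj⟩)

theorem delete_E : A.delete.E = A.E.erase A.last := rfl

theorem delete_f : A.delete.f = A.f := rfl

theorem restrict_E : A.restrict.E = A.resE := rfl

theorem restrict_f_apply (i : ℕ) (x : ker (A.f A.last)) : A.restrict.f i x = A.f i x := rfl

theorem resE_subset : A.resE ⊆ A.E.erase A.last := Finset.filter_subset _ _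

theorem last_notMem_of_subset_resE {S : Finset ℕ} (hS : S ⊆ A.resE) : A.last ∉ S :=
  fun h => Finset.ne_of_mem_erase (resE_subset (hS h)) rfl

theorem indep_iff {S : Finset ℕ} : A.Indep S ↔ S ⊆ A.E ∧ LinearIndepOn ℝ A.f (S : Set ℕ) :=
  Iff.rfl

/-- A minimal set of hyperplanes after `H_j` spanning `f_j` forms, together with `H_j`, a
circuit whose smallest element is `j`. -/
theorem exists_isBroken_subset_of_mem_span {S : Finset ℕ} (hS : A.Indep S) {j : ℕ}
    (hj : j ∈ A.E) (hspan : A.f j ∈ span ℝ (A.f '' {i | i ∈ S ∧ j < i})) :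
    ∃ T, A.IsBroken T ∧ T ⊆ S := by
  obtain ⟨T, -, hT⟩ := exists_minimal_le_of_wellFoundedLT
    (fun T : Finset ℕ => T ⊆ S.filter (j < ·) ∧ A.f j ∈ span ℝ (A.f '' T)) (S.filter (j < ·))
    ⟨subset_rfl, by simpa [Finset.coe_filter] using hspan⟩
  have hTS : T ⊆ S := hT.prop.1.trans (Finset.filter_subset _ _)
  have hjT : ∀ i ∈ T, j < i := fun i hi => (Finset.mem_filter.mp (hT.prop.1 hi)).2
  have hjT' : j ∉ T := fun h => lt_irrefl j (hjT j h)
  have hCE : insert j T ⊆ A.E := Finset.insert_subset hj (hTS.trans hS.1)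
  have hmin : (insert j T).min' (Finset.insert_nonempty j T) = j :=
    le_antisymm (Finset.min'_le _ _ (Finset.mem_insert_self j T))
      (Finset.le_min' _ _ _ (by simpa using fun i hi => (hjT i hi).le))
  refine ⟨T, ⟨insert j T, ⟨hCE, ?_, fun U hU => ⟨hU.subset.trans hCE, ?_⟩⟩,
    Finset.insert_nonempty j T, by rw [hmin, Finset.erase_insert hjT']⟩, hTS⟩
  · rw [indep_iff, Finset.coe_insert, linearIndepOn_insert hjT']
    exact fun h => h.2.2 hT.prop.2
  · by_cases hjU : j ∈ U
    · have hUT : U.erase j ⊂ T := by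
        refine Finset.ssubset_iff_subset_ne.mpr ⟨fun i hi => ?_, fun h => hU.ne ?_⟩
        · obtain ⟨hij, hiU⟩ := Finset.mem_erase.mp hi
          exact (Finset.mem_insert.mp (hU.subset hiU)).resolve_left hij
        · rw [← h, Finset.insert_erase hjU]
      have hspan' : A.f j ∉ span ℝ (A.f '' (U.erase j : Finset ℕ)) :=
        fun h => hT.not_prop_of_lt hUT ⟨hUT.subset.trans hT.prop.1, h⟩
      change LinearIndepOn ℝ A.f (U : Set ℕ)
      rw [← Finset.insert_erase hjU, Finset.coe_insert,
        linearIndepOn_insert (Finset.notMem_erase j U)]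
      exact ⟨(indep_iff.mp hS).2.mono (Finset.coe_subset.mpr (hUT.subset.trans hTS)), hspan'⟩
    · exact (indep_iff.mp hS).2.mono (Finset.coe_subset.mpr
        (((Finset.subset_insert_iff_of_notMem hjU).mp hU.subset).trans hTS))

theorem mem_nbc_iff {S : Finset ℕ} :
    S ∈ A.nbc ↔ S ⊆ A.E ∧ ∀ j ∈ A.E, A.f j ∉ span ℝ (A.f '' {i | i ∈ S ∧ j < i}) := by
  constructor
  · rintro ⟨hS, hbroken⟩
    refine ⟨hS.1, fun j hj hspan => ?_⟩
    obtain ⟨T, hT, hTS⟩ := exists_isBroken_subset_of_mem_span hS hj hspan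
    exact hbroken T hT hTS
  · rintro ⟨hSE, hS⟩
    refine ⟨⟨hSE, (linearIndepOn_finset_iff_notMem_span_gt A.f S).mpr
      fun j hj => hS j (hSE hj)⟩, ?_⟩
    rintro _ ⟨C, hC, hne, rfl⟩ hCS
    have hj := C.min'_mem hne
    set j := C.min' hne
    have hCj : A.f j ∈ span ℝ (A.f '' (C.erase j : Finset ℕ)) := by
      by_contra h
      refine hC.2.1 ⟨hC.1, ?_⟩
      change LinearIndepOn ℝ A.f (C : Set ℕ)
      rw [← Finset.insert_erase hj, Finset.coe_insert,
        linearIndepOn_insert (Finset.notMem_erase j C)]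
      exact ⟨(indep_iff.mp (hC.2.2 _ (Finset.erase_ssubset hj))).2, h⟩
    have hlater : (C.erase j : Set ℕ) ⊆ {i | i ∈ S ∧ j < i} := fun i hi => by
      obtain ⟨hij, hiC⟩ := Finset.mem_erase.mp hi
      exact ⟨hCS hi, lt_of_le_of_ne (C.min'_le i hiC) (Ne.symm hij)⟩
    exact hS j (hC.1 hj) (span_mono (Set.image_mono hlater) hCj)

theorem nbc_finite (A : NArr V) : A.nbc.Finite :=
  A.E.powerset.finite_toSet.subset fun _ hS => Finset.mem_powerset.mpr hS.1.1

theorem f_last_notMem_span {S : Finset ℕ} (hn : A.last ∈ A.E) (hS : S ⊆ A.E) :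
    A.f A.last ∉ span ℝ (A.f '' {i | i ∈ S ∧ A.last < i}) := by
  have hempty : {i | i ∈ S ∧ A.last < i} = ∅ :=
    Set.eq_empty_of_forall_notMem fun i hi => not_lt.mpr (le_last (hS hi.1)) hi.2
  rw [hempty, Set.image_empty, span_empty, mem_bot]
  exact A.nz _ hn

theorem mem_delete_nbc_iff {S : Finset ℕ} : S ∈ A.delete.nbc ↔ S ∈ A.nbc ∧ A.last ∉ S := by
  by_cases hS : A.last ∈ S
  · exact iff_of_false (fun h => Finset.ne_of_mem_erase (h.1.1 hS) rfl) fun h => h.2 hS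
  rw [mem_nbc_iff, mem_nbc_iff, delete_E, delete_f, Finset.subset_erase, and_iff_left hS,
    and_iff_left hS]
  exact and_congr_right fun hSE => forall_mem_erase_last_iff fun hn => f_last_notMem_span hn hSE

theorem insert_last_mem_nbc_iff (hne : A.E.Nonempty) {S : Finset ℕ} (hS : A.last ∉ S) :
    insert A.last S ∈ A.nbc ↔ S ⊆ A.E.erase A.last ∧
      ∀ j ∈ A.E.erase A.last, A.restrict.f j ∉ span ℝ (A.restrict.f '' {i | i ∈ S ∧ j < i}) := by
  rw [mem_nbc_iff, Finset.insert_subset_iff, and_iff_right (last_mem hne), Finset.subset_erase,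
    and_iff_left hS]
  refine and_congr_right fun hSE => ?_
  rw [← forall_mem_erase_last_iff fun hn => f_last_notMem_span hn
    (Finset.insert_subset_iff.mpr ⟨hn, hSE⟩)]
  refine forall₂_congr fun j hj => not_congr ?_
  have hlater : {i | i ∈ insert A.last S ∧ j < i} = insert A.last {i | i ∈ S ∧ j < i} := by
    ext i
    simp only [Finset.mem_insert, Set.mem_insert_iff, Set.mem_ofPred_eq]
    constructor
    · rintro ⟨rfl | hi, hji⟩
      exacts [Or.inl rfl, Or.inr ⟨hi, hji⟩]
    · rintro (rfl | ⟨hi, hji⟩)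
      exacts [⟨Or.inl rfl, lt_last hj⟩, ⟨Or.inr hi, hji⟩]
  rw [hlater, Set.image_insert_eq, ← dualRestrict_ker_mem_span_image_iff, Set.image_image]
  rfl

theorem restrict_f_mem_span_of_flat_eq {i j : ℕ}
    (h : ker (A.f i) ⊓ ker (A.f A.last) = ker (A.f j) ⊓ ker (A.f A.last)) :
    A.restrict.f i ∈ span ℝ {A.restrict.f j} :=
  mem_span_singleton_of_ker_le fun x hx => by
    have hx' : (x : V) ∈ ker (A.f j) ⊓ ker (A.f A.last) := ⟨hx, x.2⟩
    rw [← h] at hx'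
    exact hx'.1

theorem exists_resE_rep {j : ℕ} (hj : j ∈ A.E.erase A.last) (hj0 : A.restrict.f j ≠ 0) :
    ∃ m ∈ A.resE, m ≤ j ∧ ∃ c : ℝ, c ≠ 0 ∧ A.restrict.f j = c • A.restrict.f m := by
  set F := (A.E.erase A.last).filter
    fun i => ker (A.f i) ⊓ ker (A.f A.last) = ker (A.f j) ⊓ ker (A.f A.last)
  have hjF : j ∈ F := Finset.mem_filter.mpr ⟨hj, rfl⟩
  obtain ⟨hm, hflat⟩ := Finset.mem_filter.mp (F.min'_mem ⟨j, hjF⟩)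
  set m := F.min' ⟨j, hjF⟩
  obtain ⟨c, hc⟩ := mem_span_singleton.mp (restrict_f_mem_span_of_flat_eq hflat.symm)
  have hc0 : c ≠ 0 := by
    rintro rfl
    exact hj0 (by rw [← hc, zero_smul])
  refine ⟨m, Finset.mem_filter.mpr ⟨hm, fun h => hj0 ?_, fun i hi hflat' => ?_⟩,
    F.min'_le j hjF, c, hc0, hc.symm⟩
  · rw [← hc, show A.restrict.f m = 0 from h, smul_zero]
  · exact F.min'_le i (Finset.mem_filter.mpr ⟨hi, hflat'.trans hflat⟩)

theorem insert_last_mem_nbc_iff_mem_restrict_nbc (hne : A.E.Nonempty)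
    (hsimple : ∀ j ∈ A.E.erase A.last, A.restrict.f j ≠ 0) {S : Finset ℕ} (hS : A.last ∉ S) :
    insert A.last S ∈ A.nbc ↔ S ∈ A.restrict.nbc := by
  rw [insert_last_mem_nbc_iff hne hS, mem_nbc_iff, restrict_E]
  constructor
  · rintro ⟨hSE, hS'⟩
    refine ⟨fun i hi => Finset.mem_filter.mpr ⟨hSE hi, fun h0 => hS' i (hSE hi) ?_,
      fun j hj hflat => not_lt.mp fun hji => hS' j hj ?_⟩, fun j hj => hS' j (resE_subset hj)⟩
    · rw [show A.restrict.f i = 0 from h0]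
      exact zero_mem _
    · have hi' : i ∈ {i | i ∈ S ∧ j < i} := ⟨hi, hji⟩
      exact span_mono (Set.singleton_subset_iff.mpr (Set.mem_image_of_mem _ hi'))
        (restrict_f_mem_span_of_flat_eq hflat)
  · rintro ⟨hSres, hS'⟩
    refine ⟨hSres.trans resE_subset, fun j hj hspan => ?_⟩
    obtain ⟨m, hm, hmj, c, hc0, hc⟩ := exists_resE_rep hj (hsimple j hj)
    have hlater : {i | i ∈ S ∧ j < i} ⊆ {i | i ∈ S ∧ m < i} :=
      fun i hi => ⟨hi.1, hmj.trans_lt hi.2⟩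
    refine hS' m hm (span_mono (Set.image_mono hlater) ?_)
    rw [hc] at hspan
    exact (smul_mem_iff _ hc0).mp hspan

theorem bijOn_insert_last (hne : A.E.Nonempty)
    (hsimple : ∀ j ∈ A.E.erase A.last, A.restrict.f j ≠ 0) :
    Set.BijOn (insert A.last) {S | S ∈ A.restrict.nbc} {S | S ∈ A.nbc ∧ A.last ∈ S} := by
  refine ⟨fun S hS => ⟨(insert_last_mem_nbc_iff_mem_restrict_nbc hne hsimple
      (last_notMem_of_subset_resE hS.1.1)).mpr hS, Finset.mem_insert_self _ _⟩,
    fun S hS T hT hST => ?_, fun S ⟨hS, hn⟩ => ⟨S.erase A.last, ?_, Finset.insert_erase hn⟩⟩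
  · rw [← Finset.erase_insert (last_notMem_of_subset_resE hS.1.1),
      ← Finset.erase_insert (last_notMem_of_subset_resE hT.1.1)]
    exact congrArg (Finset.erase · A.last) hST
  · rw [← Finset.insert_erase hn] at hS
    exact (insert_last_mem_nbc_iff_mem_restrict_nbc hne hsimple
      (Finset.notMem_erase _ _)).mp hS

theorem last_notMem_of_mem_nbc {j : ℕ} (hj : j ∈ A.E.erase A.last) (hj0 : A.restrict.f j = 0)
    {S : Finset ℕ} (hS : S ∈ A.nbc) : A.last ∉ S := by
  intro hn
  rw [← Finset.insert_erase hn,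
    insert_last_mem_nbc_iff ⟨j, Finset.mem_of_mem_erase hj⟩ (Finset.notMem_erase _ _)] at hS
  exact hS.2 j hj (hj0 ▸ zero_mem _)

noncomputable def signVec (A : NArr V) (x : V) : ℕ → SignType :=
  restrictSigns A.E fun i => sgn (A.f i x)

theorem signVec_apply {x : V} {i : ℕ} (hi : i ∈ A.E) : A.signVec x i = sgn (A.f i x) :=
  if_pos hi

theorem isChamber_signVec {x : V} (hx : ∀ i ∈ A.E, A.f i x ≠ 0) : A.IsChamber (A.signVec x) :=
  ⟨fun i hi => by rw [signVec_apply hi, Ne, sgn_eq_zero_iff]; exact hx i hi,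
    fun i hi => if_neg hi, x, fun i hi => (signVec_apply hi).symm⟩

theorem isChamber_iff {C : ℕ → SignType} :
    A.IsChamber C ↔ ∃ x, (∀ i ∈ A.E, A.f i x ≠ 0) ∧ C = A.signVec x := by
  refine ⟨fun hC => ?_, fun ⟨x, hx, hC⟩ => hC ▸ isChamber_signVec hx⟩
  obtain ⟨x, hx⟩ := hC.2.2
  refine ⟨x, fun i hi h0 => hC.1 i hi (by rw [← hx i hi, h0, sgn_eq_zero_iff]),
    funext fun i => ?_⟩
  by_cases hi : i ∈ A.E
  · rw [signVec_apply hi, hx i hi]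
  · rw [hC.2.1 i hi, signVec, restrictSigns, if_neg hi]

theorem IsChamber.ext {C D : ℕ → SignType} (hC : A.IsChamber C) (hD : A.IsChamber D)
    (h : ∀ i ∈ A.E, C i = D i) : C = D :=
  funext fun i => by
    by_cases hi : i ∈ A.E
    · exact h i hi
    · rw [hC.2.1 i hi, hD.2.1 i hi]

theorem chambers_finite (A : NArr V) : {C | A.IsChamber C}.Finite :=
  Set.Finite.of_finite_image (f := fun C i => C (i : A.E)) (Set.toFinite _)
    fun _ hC _ hD h => hC.ext hD fun i hi => congrFun h ⟨i, hi⟩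

theorem restrictSigns_signVec_eq {S : Finset ℕ} (hS : S ⊆ A.E) {x y : V}
    (h : ∀ i ∈ S, sgn (A.f i y) = sgn (A.f i x)) :
    restrictSigns S (A.signVec y) = restrictSigns S fun i => sgn (A.f i x) := by
  rw [signVec, restrictSigns_restrictSigns hS]
  funext i
  by_cases hi : i ∈ S
  · simp only [restrictSigns, if_pos hi, h i hi]
  · simp only [restrictSigns, if_neg hi]

theorem IsChamber.delete {C : ℕ → SignType} (hC : A.IsChamber C) :
    A.delete.IsChamber (restrictSigns (A.E.erase A.last) C) := by
  obtain ⟨x, hx, rfl⟩ := isChamber_iff.mp hC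
  rw [signVec, restrictSigns_restrictSigns (Finset.erase_subset _ _)]
  exact isChamber_signVec (A := A.delete) fun i hi => hx i (Finset.mem_of_mem_erase hi)

theorem upperCond.isChamber_restrict {B C : ℕ → SignType} (hC : A.IsChamber C)
    (hu : A.upperCond B C) : A.restrict.IsChamber (restrictSigns A.resE C) := by
  obtain ⟨z, hz0, hz⟩ := hu.2
  refine ⟨fun i hi => ?_, fun i hi => if_neg hi, ⟨z, mem_ker.mpr hz0⟩, fun i hi => ?_⟩
  · rw [restrictSigns, if_pos (show i ∈ A.resE from hi)]
    exact hC.1 i (Finset.mem_of_mem_erase (resE_subset hi))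
  · rw [restrictSigns, if_pos (show i ∈ A.resE from hi), restrict_f_apply]
    exact hz i (resE_subset hi)

theorem upperCond.apply_eq_sgn_mul {B C : ℕ → SignType} (hu : A.upperCond B C) {i m : ℕ}
    (hi : i ∈ A.E.erase A.last) (hm : m ∈ A.E.erase A.last) {c : ℝ}
    (hc : A.restrict.f i = c • A.restrict.f m) : C i = sgn c * C m := by
  obtain ⟨z, hz0, hz⟩ := hu.2
  rw [← hz i hi, ← hz m hm, ← sgn_mul]
  have := congrArg (sgn <| · ⟨z, mem_ker.mpr hz0⟩) hc
  simpa only [LinearMap.smul_apply, smul_eq_mul, restrict_f_apply] using this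

theorem not_upperCond_of_restrict_f_eq_zero {j : ℕ} (hj : j ∈ A.E.erase A.last)
    (hj0 : A.restrict.f j = 0) {B C : ℕ → SignType} (hC : A.IsChamber C) :
    ¬ A.upperCond B C := by
  rintro ⟨-, z, hz0, hz⟩
  have hjz := congrArg (· ⟨z, mem_ker.mpr hz0⟩) hj0
  simp only [restrict_f_apply, LinearMap.zero_apply] at hjz
  exact hC.1 j (Finset.mem_of_mem_erase hj) (by rw [← hz j hj, hjz, sgn_eq_zero_iff])

theorem exists_push_off_last (hne : A.E.Nonempty) {z : V} (hz0 : A.f A.last z = 0)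
    (hz : ∀ i ∈ A.E.erase A.last, A.f i z ≠ 0) {s : SignType} (hs : s ≠ 0) :
    ∃ y, sgn (A.f A.last y) = s ∧ ∀ i ∈ A.E.erase A.last, sgn (A.f i y) = sgn (A.f i z) := by
  obtain ⟨w, hw⟩ := exists_sgn_eq (A.nz _ (last_mem hne)) hs
  obtain ⟨ε, hε, hεz⟩ := exists_pos_sgn_add_mul_eq _ (fun i => A.f i z) (fun i => A.f i w) hz
  refine ⟨z + ε • w, ?_, fun i hi => by simpa using hεz i hi⟩
  rw [map_add, map_smul, hz0, zero_add, smul_eq_mul, sgn_mul, hw, sgn_eq_sign, sign_pos hε,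
    one_mul]

theorem exists_cut_of_ne {C D : ℕ → SignType} (hC : A.IsChamber C) (hD : A.IsChamber D)
    (hn : A.last ∈ A.E) (heq : ∀ i ∈ A.E.erase A.last, C i = D i) (hCD : C A.last ≠ D A.last) :
    ∃ z, A.f A.last z = 0 ∧ ∀ i ∈ A.E.erase A.last, sgn (A.f i z) = C i := by
  obtain ⟨x, hx, rfl⟩ := isChamber_iff.mp hC
  obtain ⟨y, hy, rfl⟩ := isChamber_iff.mp hD
  rw [signVec_apply hn, signVec_apply hn] at hCD
  have hxy : |A.f A.last y| * A.f A.last x + |A.f A.last x| * A.f A.last y = 0 := by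
    rcases (hx _ hn).lt_or_gt with ha | ha <;> rcases (hy _ hn).lt_or_gt with hb | hb
    · exact absurd (by rw [sgn_eq_sign, sgn_eq_sign, sign_neg ha, sign_neg hb]) hCD
    · rw [abs_of_neg ha, abs_of_pos hb]; ring
    · rw [abs_of_pos ha, abs_of_neg hb]; ring
    · exact absurd (by rw [sgn_eq_sign, sgn_eq_sign, sign_pos ha, sign_pos hb]) hCD
  refine ⟨|A.f A.last y| • x + |A.f A.last x| • y, by simpa using hxy, fun i hi => ?_⟩
  have hiE := Finset.mem_of_mem_erase hi
  have hsgn : sgn (A.f i x) = sgn (A.f i y) := by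
    rw [← signVec_apply hiE, ← signVec_apply hiE]
    exact heq i hi
  rw [signVec_apply hiE, map_add, map_smul, map_smul, smul_eq_mul, smul_eq_mul,
    sgn_add_of_sgn_eq (abs_pos.mpr (hy _ hn)) (abs_pos.mpr (hx _ hn)) hsgn]
theorem bijOn_delete (hne : A.E.Nonempty) {B : ℕ → SignType} (hBn : B A.last ≠ 0) :
    Set.BijOn (restrictSigns (A.E.erase A.last))
      {C | A.IsChamber C ∧ ¬ A.upperCond B C} {C' | A.delete.IsChamber C'} := by
  have hn := last_mem hne
  refine ⟨fun C hC => hC.1.delete, fun C ⟨hC, hCu⟩ D ⟨hD, hDu⟩ heq => ?_, fun C' hC' => ?_⟩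
  · have heq' : ∀ i ∈ A.E.erase A.last, C i = D i := fun i hi => by
      simpa [restrictSigns, hi] using congrFun heq i
    refine hC.ext hD fun i hi => ?_
    rcases eq_or_ne i A.last with rfl | hin
    · by_contra hCD
      obtain ⟨z, hz0, hz⟩ := exists_cut_of_ne hC hD hn heq' hCD
      by_cases hCB : C A.last = B A.last
      · exact hDu ⟨fun h => hCD (hCB.trans h.symm), z, hz0,
          fun j hj => (hz j hj).trans (heq' j hj)⟩
      · exact hCu ⟨hCB, z, hz0, hz⟩
    · exact heq' i (Finset.mem_erase.mpr ⟨hin, hi⟩)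
  · obtain ⟨x, hx, rfl⟩ := isChamber_iff.mp hC'
    rw [delete_E, delete_f] at hx
    by_cases hcut : ∃ z, A.f A.last z = 0 ∧
        ∀ i ∈ A.E.erase A.last, sgn (A.f i z) = sgn (A.f i x)
    · obtain ⟨z, hz0, hz⟩ := hcut
      obtain ⟨y, hyn, hy⟩ := exists_push_off_last hne hz0 (fun i hi h0 =>
        hx i hi (sgn_eq_zero_iff.mp (by rw [← hz i hi, h0, sgn_eq_zero_iff]))) hBn
      have hyx : ∀ i ∈ A.E.erase A.last, sgn (A.f i y) = sgn (A.f i x) :=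
        fun i hi => (hy i hi).trans (hz i hi)
      refine ⟨A.signVec y, ⟨isChamber_signVec ((forall_mem_erase_last_iff fun _ h0 => ?_).mp
        fun i hi h0 => hx i hi ?_), fun hu => hu.1 ?_⟩, restrictSigns_signVec_eq
        (Finset.erase_subset _ _) hyx⟩
      · rw [h0, sgn_eq_zero_iff.mpr rfl] at hyn
        exact hBn hyn.symm
      · rw [← sgn_eq_zero_iff, ← hyx i hi, h0, sgn_eq_zero_iff]
      · rw [signVec_apply hn, hyn]
    · have hxn : A.f A.last x ≠ 0 := fun h0 => hcut ⟨x, h0, fun _ _ => rfl⟩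
      refine ⟨A.signVec x, ⟨isChamber_signVec ((forall_mem_erase_last_iff fun _ => hxn).mp hx),
        fun hu => hcut ?_⟩, restrictSigns_signVec_eq (Finset.erase_subset _ _) fun _ _ => rfl⟩
      obtain ⟨-, z, hz0, hz⟩ := hu
      exact ⟨z, hz0, fun i hi => (hz i hi).trans (signVec_apply (Finset.mem_of_mem_erase hi))⟩

theorem bijOn_restrict (hne : A.E.Nonempty) {B : ℕ → SignType} (hBn : B A.last ≠ 0)
    (hsimple : ∀ j ∈ A.E.erase A.last, A.restrict.f j ≠ 0) :
    Set.BijOn (restrictSigns A.resE)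
      {C | A.IsChamber C ∧ A.upperCond B C} {D | A.restrict.IsChamber D} := by
  have hn := last_mem hne
  refine ⟨fun C hC => hC.2.isChamber_restrict hC.1,
    fun C ⟨hC, hCu⟩ D ⟨hD, hDu⟩ heq => hC.ext hD fun i hi => ?_, fun D hD => ?_⟩
  · rcases eq_or_ne i A.last with rfl | hin
    · exact SignType.eq_of_ne_of_ne (hC.1 _ hi) (hD.1 _ hi) hBn hCu.1 hDu.1
    · have hi' := Finset.mem_erase.mpr ⟨hin, hi⟩
      obtain ⟨m, hm, -, c, -, hc⟩ := exists_resE_rep hi' (hsimple i hi')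
      rw [hCu.apply_eq_sgn_mul hi' (resE_subset hm) hc,
        hDu.apply_eq_sgn_mul hi' (resE_subset hm) hc]
      congr 1
      simpa [restrictSigns, hm] using congrFun heq m
  · obtain ⟨⟨x, hx0⟩, hx, rfl⟩ := isChamber_iff.mp hD
    have hxE : ∀ i ∈ A.E.erase A.last, A.f i x ≠ 0 := fun i hi => by
      obtain ⟨m, hm, -, c, hc0, hc⟩ := exists_resE_rep hi (hsimple i hi)
      have hcx := congrArg (· ⟨x, hx0⟩) hc
      simp only [LinearMap.smul_apply, smul_eq_mul, restrict_f_apply] at hcx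
      rw [hcx]
      exact mul_ne_zero hc0 (hx m hm)
    have hBn' : -B A.last ≠ 0 := by simpa using hBn
    obtain ⟨y, hyn, hy⟩ := exists_push_off_last hne (mem_ker.mp hx0) hxE hBn'
    refine ⟨A.signVec y, ⟨isChamber_signVec ((forall_mem_erase_last_iff fun _ h0 => ?_).mp
      fun i hi h0 => hxE i hi ?_), ?_, x, mem_ker.mp hx0, fun i hi => ?_⟩,
      restrictSigns_signVec_eq (resE_subset.trans (Finset.erase_subset _ _))
        fun i hi => hy i (resE_subset hi)⟩
    · rw [h0, sgn_eq_zero_iff.mpr rfl] at hyn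
      exact hBn' hyn.symm
    · rw [← sgn_eq_zero_iff, ← hy i hi, h0, sgn_eq_zero_iff]
    · rw [signVec_apply hn, hyn]
      revert hBn
      cases B A.last <;> decide
    · rw [signVec_apply (Finset.mem_of_mem_erase hi), hy i hi]

theorem ncard_chambers_eq_ncard_nbc_of_E_eq_empty (hE : A.E = ∅)
    {η : (ℕ → SignType) → Finset ℕ} (hη : ∀ C, η C = ∅) (p : ℕ → Prop) :
    {C | A.IsChamber C ∧ p (η C).card}.ncard = {S | S ∈ A.nbc ∧ p S.card}.ncard := by
  have hC : ∀ C, A.IsChamber C ↔ C = 0 := fun C => by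
    refine ⟨fun hC => funext fun i => hC.2.1 i (by simp [hE]), ?_⟩
    rintro rfl
    exact ⟨by simp [hE], fun _ _ => rfl, 0, by simp [hE]⟩
  have hS : ∀ S, S ∈ A.nbc ↔ S = ∅ := fun S => by simp [mem_nbc_iff, hE]
  have hS' : {S : Finset ℕ | S = ∅ ∧ p S.card} = {S | S = ∅ ∧ p 0} := by
    ext S
    constructor <;> rintro ⟨rfl, h⟩ <;> exact ⟨rfl, h⟩
  simp only [hC, hS, hη, Finset.card_empty, hS']
  by_cases hp : p 0 <;> simp [hp]

end NArr

open NArr in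
theorem IsJO.subset_E {A : NArr V} {B : ℕ → SignType} {η : (ℕ → SignType) → Finset ℕ}
    (h : IsJO V A B η) : ∀ C, A.IsChamber C → η C ⊆ A.E := by
  induction h with
  | base A B η hE hη => exact fun C _ => by rw [hη]; exact Finset.empty_subset _
  | step A B η η' η'' hne _ _ hnotup hup ih' ih'' =>
    intro C hC
    by_cases hu : A.upperCond B C
    · rw [hup C hC hu]
      exact Finset.insert_subset (last_mem hne) ((ih'' _ (hu.isChamber_restrict hC)).trans
        (resE_subset.trans (Finset.erase_subset _ _)))
    · rw [hnotup C hC hu]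
      exact (ih' _ hC.delete).trans (Finset.erase_subset _ _)

open NArr in
theorem IsJO.ncard_chambers_eq_ncard_nbc {A : NArr V} {B : ℕ → SignType}
    {η : (ℕ → SignType) → Finset ℕ} (h : IsJO V A B η) (hB : ∀ i ∈ A.E, B i ≠ 0)
    (p : ℕ → Prop) :
    {C | A.IsChamber C ∧ p (η C).card}.ncard = {S | S ∈ A.nbc ∧ p S.card}.ncard := by
  induction h generalizing p with
  | base A B η hE hη => exact ncard_chambers_eq_ncard_nbc_of_E_eq_empty hE hη p
  | step A B η η' η'' hne _ hJO'' hnotup hup ih' ih'' =>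
    have hBn := hB _ (last_mem hne)
    rw [ncard_and_eq_add A.chambers_finite (A.upperCond B),
      ncard_and_eq_add (P := (· ∈ A.nbc)) A.nbc_finite (A.last ∈ ·)]
    congr 1
    · by_cases hsimple : ∀ j ∈ A.E.erase A.last, A.restrict.f j ≠ 0
      · calc _ = {D | A.restrict.IsChamber D ∧ p ((η'' D).card + 1)}.ncard :=
              ncard_and_eq_of_bijOn (bijOn_restrict hne hBn hsimple) fun C ⟨hC, hu⟩ => by
                rw [hup C hC hu, Finset.card_insert_of_notMem (last_notMem_of_subset_resE
                  (hJO''.subset_E _ (hu.isChamber_restrict hC)))]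
          _ = {S | S ∈ A.restrict.nbc ∧ p (S.card + 1)}.ncard :=
              ih'' (restrictSigns_ne_zero hB (resE_subset.trans (Finset.erase_subset _ _)))
                fun k => p (k + 1)
          _ = _ := ncard_and_eq_of_bijOn (bijOn_insert_last hne hsimple) fun S hS => by
                rw [Finset.card_insert_of_notMem (last_notMem_of_subset_resE hS.1.1)]
      · push Not at hsimple
        obtain ⟨j, hj, hj0⟩ := hsimple
        have hCe : {C | (A.IsChamber C ∧ A.upperCond B C) ∧ p (η C).card} = ∅ :=
          Set.eq_empty_of_forall_notMem fun C hC =>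
            not_upperCond_of_restrict_f_eq_zero hj hj0 hC.1.1 hC.1.2
        have hSe : {S | (S ∈ A.nbc ∧ A.last ∈ S) ∧ p S.card} = ∅ :=
          Set.eq_empty_of_forall_notMem fun S hS => last_notMem_of_mem_nbc hj hj0 hS.1.1 hS.1.2
        rw [hCe, hSe, Set.ncard_empty, Set.ncard_empty]
    · calc _ = {C' | A.delete.IsChamber C' ∧ p (η' C').card}.ncard :=
            ncard_and_eq_of_bijOn (bijOn_delete hne hBn) fun C hC => by rw [hnotup C hC.1 hC.2]
        _ = {S | S ∈ A.delete.nbc ∧ p S.card}.ncard :=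
            ih' (restrictSigns_ne_zero hB (Finset.erase_subset _ _)) p
        _ = _ := by simp only [mem_delete_nbc_iff]

theorem counting_critical_cells_general (A : NArr V) (B : ℕ → SignType)
    (hB : A.IsChamber B)
    (η : (ℕ → SignType) → Finset ℕ) (hη : IsJO V A B η) (k : ℕ) :
    Set.ncard {C | A.IsChamber C ∧ (η C).card = k} =
      Set.ncard {S | S ∈ A.nbc ∧ S.card = k} :=
  hη.ncard_chambers_eq_ncard_nbc hB.1 (· = k)

/-- Minimality count: if the ordering of `A` satisfies the cut property with respect to
`B`, then for every `k` the number of chambers `C` with `|η(C)| = k` equals the number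
of no-broken-circuit sets of `A` of cardinality `k` (which is the `k`-th Betti number
of the complement of the complexified arrangement); these numbers count the critical
cells in dimension `k` of the acyclic matchings of the Salvetti complex. -/
theorem counting_critical_cells (A : NArr V) (B : ℕ → SignType)
    (hB : A.IsChamber B) (hcut : A.CutProp B)
    (η : (ℕ → SignType) → Finset ℕ) (hη : IsJO V A B η) (k : ℕ) :
    Set.ncard {C | A.IsChamber C ∧ (η C).card = k} =
      Set.ncard {S | S ∈ A.nbc ∧ S.card = k} :=
  counting_critical_cells_general A B hB η hη k
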